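/- Let F : E × E → ℝ be differentiable and satisfy F(q, s • p) = s * F(q, p) for all nonzero s ∈ ℝ and all (q, p), and define the Hamiltonian vector field X_F (q, p) = (∑ i, fderiv ℝ F (q,p) (0, e i) • e i, − ∑ i, fderiv ℝ F (q,p) (e i, 0) • e i) ∈ E × E. Then for every nonzero s ∈ ℝ and every (q, p), X_F (q, s • p) = ((X_F (q, p)).1, s • (X_F (q, p)).2); i.e. the Hamiltonian vector field of a homogeneous function is equivariant under the fiberwise scaling, hence projectable to the quotient (the key step of part (c) of the proof of Theorem 3.3 of the paper, in canonical coordinates). -/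

import Mathlib

noncomputable section

/-!
Differentiating `F ∘ φ_s = s • F`, where the fiberwise scaling `φ_s` is a linear isomorphism,
gives `dF_{φ_s x} ∘ φ_s = s • dF_x`. On fiber directions `(0, w)` the factor `s` coming from
`φ_s` cancels the one on the right, so `∂F/∂p` is invariant; on base directions `(v, 0)`
`φ_s` acts trivially, so `∂F/∂q` scales by `s`.
-/

/-- The `i`-th standard basis vector of `EuclideanSpace ℝ (Fin n)`. -/
def stdBasis (n : ℕ) (i : Fin n) : EuclideanSpace ℝ (Fin n) :=
  EuclideanSpace.single i (1 : ℝ)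

/-- The Hamiltonian vector field `X_F = (∂F/∂p, −∂F/∂q)` of a function `F` on the
phase space `E × E`, `E = EuclideanSpace ℝ (Fin n)`, in canonical coordinates. -/
def hamVF {n : ℕ}
    (F : EuclideanSpace ℝ (Fin n) × EuclideanSpace ℝ (Fin n) → ℝ)
    (x : EuclideanSpace ℝ (Fin n) × EuclideanSpace ℝ (Fin n)) :
    EuclideanSpace ℝ (Fin n) × EuclideanSpace ℝ (Fin n) :=
  (∑ i : Fin n, fderiv ℝ F x (0, stdBasis n i) • stdBasis n i,
    - ∑ i : Fin n, fderiv ℝ F x (stdBasis n i, 0) • stdBasis n i)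

section FiberwiseHomogeneous

variable {𝕜 E F G : Type*} [NontriviallyNormedField 𝕜]
  [NormedAddCommGroup E] [NormedSpace 𝕜 E] [NormedAddCommGroup F] [NormedSpace 𝕜 F]
  [NormedAddCommGroup G] [NormedSpace 𝕜 G]

theorem fderiv_comp_eq_smul_of_comp_eq_smul {f : E → G} (L : E ≃L[𝕜] E) (c : 𝕜)
    (h : f ∘ L = c • f) (x : E) :
    (fderiv 𝕜 f (L x)).comp (L : E →L[𝕜] E) = c • fderiv 𝕜 f x := by
  rw [← L.comp_right_fderiv, h, fderiv_const_smul_field]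
  rfl

def fiberScaling (s : 𝕜) (hs : s ≠ 0) : (E × F) ≃L[𝕜] (E × F) :=
  (ContinuousLinearEquiv.refl 𝕜 E).prodCongr (ContinuousLinearEquiv.smulLeft (Units.mk0 s hs))

variable {f : E × F → G} {s : 𝕜}

theorem fderiv_apply_of_fiberwise_homogeneous (hs : s ≠ 0)
    (hf : ∀ q p, f (q, s • p) = s • f (q, p)) (q v : E) (p w : F) :
    fderiv 𝕜 f (q, s • p) (v, s • w) = s • fderiv 𝕜 f (q, p) (v, w) := by
  have h : f ∘ fiberScaling s hs = s • f := funext fun x => hf x.1 x.2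
  exact congr($(fderiv_comp_eq_smul_of_comp_eq_smul (fiberScaling s hs) s h (q, p)) (v, w))

theorem fderiv_apply_horizontal_of_fiberwise_homogeneous (hs : s ≠ 0)
    (hf : ∀ q p, f (q, s • p) = s • f (q, p)) (q v : E) (p : F) :
    fderiv 𝕜 f (q, s • p) (v, 0) = s • fderiv 𝕜 f (q, p) (v, 0) := by
  simpa using fderiv_apply_of_fiberwise_homogeneous hs hf q v p 0

theorem fderiv_apply_vertical_of_fiberwise_homogeneous (hs : s ≠ 0)
    (hf : ∀ q p, f (q, s • p) = s • f (q, p)) (q : E) (p w : F) :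
    fderiv 𝕜 f (q, s • p) (0, w) = fderiv 𝕜 f (q, p) (0, w) := by
  have h := fderiv_apply_of_fiberwise_homogeneous hs hf q 0 p (s⁻¹ • w)
  rw [smul_inv_smul₀ hs] at h
  rw [h, show ((0 : E), s⁻¹ • w) = s⁻¹ • ((0 : E), w) by simp, map_smul, smul_inv_smul₀ hs]

end FiberwiseHomogeneous

theorem hamVF_of_homogeneous_equivariant_general {n : ℕ}
    (F : EuclideanSpace ℝ (Fin n) × EuclideanSpace ℝ (Fin n) → ℝ)
    (hFhom : ∀ s : ℝ, s ≠ 0 → ∀ q p : EuclideanSpace ℝ (Fin n),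
      F (q, s • p) = s * F (q, p)) :
    ∀ s : ℝ, s ≠ 0 → ∀ q p : EuclideanSpace ℝ (Fin n),
      hamVF F (q, s • p) = ((hamVF F (q, p)).1, s • (hamVF F (q, p)).2) := by
  intro s hs q p
  ext : 1
  · simp only [hamVF, fderiv_apply_vertical_of_fiberwise_homogeneous hs (hFhom s hs)]
  · simp only [hamVF, fderiv_apply_horizontal_of_fiberwise_homogeneous hs (hFhom s hs),
      smul_neg, Finset.smul_sum, smul_smul, smul_eq_mul]

/-- The Hamiltonian vector field of a fiberwise-homogeneous function
of degree one is equivariant under the fiberwise scaling `φ_s(q, p) = (q, s • p)`. -/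
theorem hamVF_of_homogeneous_equivariant {n : ℕ}
    (F : EuclideanSpace ℝ (Fin n) × EuclideanSpace ℝ (Fin n) → ℝ)
    (hF : Differentiable ℝ F)
    (hFhom : ∀ s : ℝ, s ≠ 0 → ∀ q p : EuclideanSpace ℝ (Fin n),
      F (q, s • p) = s * F (q, p)) :
    ∀ s : ℝ, s ≠ 0 → ∀ q p : EuclideanSpace ℝ (Fin n),
      hamVF F (q, s • p) = ((hamVF F (q, p)).1, s • (hamVF F (q, p)).2) :=
  hamVF_of_homogeneous_equivariant_general F hFhom
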